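/- The set S = ⋂ₙ Eₙ is dense in the disc algebra A(D): every f ∈ A(D) is the uniform limit of functions g ∈ A(D) whose real parts on the unit circle belong to every Dₙ. -/

import Mathlib

/-!
Dilating `f` to `z ↦ f (r z)` with `r < 1` close to `1` moves it uniformly little, and makes its
boundary values Lipschitz in `θ`. Adding a small multiple of the lacunary series
`∑ 4⁻ᵏ z ^ 64ᵏ`, whose boundary real part is the Weierstrass function `∑ 4⁻ᵏ cos (64ᵏ θ)`,
then lands in `S`: near every `θ` the Weierstrass function has right difference quotients of
size `≈ 16ᵐ` at scale `64⁻ᵐ`, and such unbounded quotients survive positive scaling and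
Lipschitz perturbations.
-/

open scoped Classical

instance : CompactSpace (Metric.closedBall (0 : ℂ) 1) :=
  isCompact_iff_compactSpace.mp (isCompact_closedBall 0 1)

/-- The disc algebra: continuous functions on the closed unit disc that are
holomorphic on the open unit disc, with the supremum metric (inherited from `C(·,ℂ)`). -/
def DiscAlgebra : Type :=
  {f : C(Metric.closedBall (0 : ℂ) 1, ℂ) //
    DifferentiableOn ℂ
      (fun z : ℂ => if h : z ∈ Metric.closedBall (0 : ℂ) 1 then f ⟨z, h⟩ else 0)
      (Metric.ball (0 : ℂ) 1)}

noncomputable instance : MetricSpace DiscAlgebra :=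
  inferInstanceAs (MetricSpace {f : C(Metric.closedBall (0 : ℂ) 1, ℂ) //
    DifferentiableOn ℂ
      (fun z : ℂ => if h : z ∈ Metric.closedBall (0 : ℂ) 1 then f ⟨z, h⟩ else 0)
      (Metric.ball (0 : ℂ) 1)})

lemma exp_mem_closedBall (θ : ℝ) :
    Complex.exp (θ * Complex.I) ∈ Metric.closedBall (0 : ℂ) 1 := by
  simp [Metric.mem_closedBall, Complex.dist_eq, Complex.norm_exp_ofReal_mul_I]

/-- The boundary values of `f ∈ A(D)`, as a `2π`-periodic function of `θ`. -/
noncomputable def bdry (f : DiscAlgebra) (θ : ℝ) : ℂ :=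
  f.1 ⟨Complex.exp (θ * Complex.I), exp_mem_closedBall θ⟩

/-- The set `S = ⋂ₙ Eₙ` of disc algebra functions whose boundary real part
belongs to every `Dₙ`. -/
def Sset : Set DiscAlgebra :=
  {f | ∀ n : ℕ, 0 < n → ∀ θ : ℝ, ∃ y ∈ Set.Ioo θ (θ + 1 / n),
    |(bdry f y).re - (bdry f θ).re| > n * |y - θ|}

open Filter Metric Set Real

/-- `u ∈ ⋂ₙ Dₙ`. -/
def RightDiffQuotUnbounded (u : ℝ → ℝ) : Prop :=
  ∀ n : ℕ, 0 < n → ∀ θ : ℝ, ∃ y ∈ Ioo θ (θ + 1 / n), |u y - u θ| > n * |y - θ|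

namespace RightDiffQuotUnbounded

variable {u : ℝ → ℝ}

lemma exists_lt (hu : RightDiffQuotUnbounded u) (M : ℝ) {δ : ℝ} (hδ : 0 < δ) (θ : ℝ) :
    ∃ y ∈ Ioo θ (θ + δ), M * |y - θ| < |u y - u θ| := by
  obtain ⟨N, hN⟩ := exists_nat_gt (max M (1 / δ))
  have hNδ : 1 / δ < N := (le_max_right _ _).trans_lt hN
  have hN0 : (0 : ℝ) < N := (one_div_pos.2 hδ).trans hNδ
  obtain ⟨y, ⟨hθy, hyN⟩, hy⟩ := hu N (by exact_mod_cast hN0) θ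
  refine ⟨y, ⟨hθy, hyN.trans ?_⟩, ?_⟩
  · exact add_lt_add_right ((one_div_lt hN0 hδ).2 hNδ) θ
  · calc M * |y - θ| ≤ N * |y - θ| := by gcongr; exact (le_max_left _ _).trans hN.le
      _ < |u y - u θ| := hy

lemma const_mul (hu : RightDiffQuotUnbounded u) {c : ℝ} (hc : 0 < c) :
    RightDiffQuotUnbounded (fun θ => c * u θ) := by
  intro n hn θ
  obtain ⟨y, hy, hlt⟩ := hu.exists_lt (n / c) (by positivity : (0 : ℝ) < 1 / n) θ
  refine ⟨y, hy, ?_⟩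
  rw [← mul_sub, abs_mul, abs_of_pos hc]
  calc (n : ℝ) * |y - θ| = c * (n / c * |y - θ|) := by field_simp
    _ < c * |u y - u θ| := by gcongr

lemma add_lipschitzWith (hu : RightDiffQuotUnbounded u) {v : ℝ → ℝ} {K : NNReal}
    (hv : LipschitzWith K v) : RightDiffQuotUnbounded (fun θ => u θ + v θ) := by
  intro n hn θ
  obtain ⟨y, hy, hlt⟩ := hu.exists_lt (n + K) (by positivity : (0 : ℝ) < 1 / n) θ
  refine ⟨y, hy, ?_⟩
  have hv' : |v y - v θ| ≤ K * |y - θ| := by simpa [Real.dist_eq] using hv.dist_le_mul y θ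
  have htri : |u y - u θ| ≤ |u y + v y - (u θ + v θ)| + |v y - v θ| := by
    calc |u y - u θ| = |(u y + v y - (u θ + v θ)) - (v y - v θ)| := by ring_nf
      _ ≤ _ := abs_sub _ _
  rw [add_mul] at hlt
  linarith

end RightDiffQuotUnbounded

noncomputable def weierstrassFun (θ : ℝ) : ℝ := ∑' k : ℕ, (1 / 4 : ℝ) ^ k * cos (64 ^ k * θ)

lemma summable_weierstrassFun (θ : ℝ) :
    Summable fun k : ℕ => (1 / 4 : ℝ) ^ k * cos (64 ^ k * θ) := by
  refine (summable_geometric_of_lt_one (r := 1 / 4) (by norm_num) (by norm_num)).of_norm_bounded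
    fun k => ?_
  rw [norm_mul, norm_pow, Real.norm_of_nonneg (by norm_num : (0 : ℝ) ≤ 1 / 4)]
  exact mul_le_of_le_one_right (by positivity) (abs_cos_le_one _)

lemma cos_pow_mul_grid {m k : ℕ} (hmk : m ≤ k) (j : ℤ) :
    cos (64 ^ k * (j * (2 * π / 64 ^ m))) = 1 := by
  obtain ⟨d, rfl⟩ := Nat.exists_eq_add_of_le hmk
  have : (64 : ℝ) ^ (m + d) * (j * (2 * π / 64 ^ m)) = ((64 ^ d * j : ℤ) : ℝ) * (2 * π) := by
    rw [pow_add]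
    push_cast
    field_simp
  rw [this, cos_int_mul_two_pi]

lemma cos_pow_mul_halfGrid (m : ℕ) (j : ℤ) :
    cos (64 ^ m * ((j + 1 / 2) * (2 * π / 64 ^ m))) = -1 := by
  have : (64 : ℝ) ^ m * ((j + 1 / 2) * (2 * π / 64 ^ m)) = π + j * (2 * π) := by
    field_simp
    ring
  rw [this, cos_add_int_mul_two_pi, cos_pi]

lemma cos_pow_mul_halfGrid_of_lt {m k : ℕ} (hmk : m < k) (j : ℤ) :
    cos (64 ^ k * ((j + 1 / 2) * (2 * π / 64 ^ m))) = 1 := by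
  obtain ⟨d, rfl⟩ := Nat.exists_eq_add_of_lt hmk
  have : (64 : ℝ) ^ (m + d + 1) * ((j + 1 / 2) * (2 * π / 64 ^ m)) =
      ((64 ^ d * (64 * j + 32) : ℤ) : ℝ) * (2 * π) := by
    rw [pow_succ, pow_add]
    push_cast
    field_simp
    ring
  rw [this, cos_int_mul_two_pi]

lemma abs_sum_range_cos_sub_le (a b : ℝ) (m : ℕ) :
    |∑ k ∈ Finset.range m, (1 / 4 : ℝ) ^ k * (cos (64 ^ k * a) - cos (64 ^ k * b))| ≤
      |a - b| * 16 ^ m / 15 := by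
  have hterm : ∀ k : ℕ, |(1 / 4 : ℝ) ^ k * (cos (64 ^ k * a) - cos (64 ^ k * b))| ≤
      |a - b| * 16 ^ k := fun k => by
    calc |(1 / 4 : ℝ) ^ k * (cos (64 ^ k * a) - cos (64 ^ k * b))|
        ≤ (1 / 4) ^ k * |64 ^ k * a - 64 ^ k * b| := by
          rw [abs_mul, abs_of_pos (by positivity)]
          exact mul_le_mul_of_nonneg_left (abs_cos_sub_cos_le _ _) (by positivity)
      _ = |a - b| * 16 ^ k := by
          rw [← mul_sub, abs_mul, abs_of_pos (by positivity), ← mul_assoc, ← mul_pow]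
          norm_num [mul_comm]
  have hgeom : ∑ k ∈ Finset.range m, (16 : ℝ) ^ k ≤ 16 ^ m / 15 := by
    rw [geom_sum_eq (by norm_num)]
    norm_num
    gcongr
    linarith
  calc _ ≤ ∑ k ∈ Finset.range m, |a - b| * 16 ^ k :=
        (Finset.abs_sum_le_sum_abs _ _).trans (Finset.sum_le_sum fun k _ => hterm k)
    _ ≤ |a - b| * 16 ^ m / 15 := by
        rw [← Finset.mul_sum, mul_div_assoc]
        gcongr

lemma abs_weierstrassFun_sub_ge {m : ℕ} {a b : ℝ} (ha : ∀ k, m ≤ k → cos (64 ^ k * a) = 1)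
    (hbm : cos (64 ^ m * b) = -1) (hb : ∀ k, m < k → cos (64 ^ k * b) = 1)
    (hab : |a - b| ≤ 2 * π / 64 ^ m) :
    3 / 2 * (1 / 4 : ℝ) ^ m ≤ |weierstrassFun a - weierstrassFun b| := by
  set head := ∑ k ∈ Finset.range m, (1 / 4 : ℝ) ^ k * (cos (64 ^ k * a) - cos (64 ^ k * b))
  have hsplit : weierstrassFun a - weierstrassFun b = head + 2 * (1 / 4) ^ m := by
    rw [weierstrassFun, weierstrassFun,
      ← (summable_weierstrassFun a).tsum_sub (summable_weierstrassFun b),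
      tsum_eq_sum (s := Finset.range (m + 1)), Finset.sum_range_succ, ha m le_rfl, hbm]
    · simp only [head, mul_sub]
      ring
    · intro k hk
      have hmk : m < k := by simpa using hk
      rw [ha k hmk.le, hb k hmk, sub_self]
  have hhead : |head| ≤ 1 / 2 * (1 / 4) ^ m := by
    have h16 : (16 : ℝ) ^ m = (1 / 4) ^ m * 64 ^ m := by rw [← mul_pow]; norm_num
    calc |head| ≤ |a - b| * 16 ^ m / 15 := abs_sum_range_cos_sub_le a b m
      _ ≤ 2 * π / 64 ^ m * 16 ^ m / 15 := by gcongr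
      _ = 2 * π / 15 * (1 / 4) ^ m := by rw [h16]; field_simp
      _ ≤ 1 / 2 * (1 / 4) ^ m :=
          mul_le_mul_of_nonneg_right (by linarith [pi_lt_d2]) (by positivity)
  rw [hsplit]
  exact le_abs.2 (Or.inl (by linarith [neg_abs_le head]))

lemma exists_abs_weierstrassFun_sub_ge (θ : ℝ) (m : ℕ) :
    ∃ y ∈ Ioc θ (θ + 2 * π / 64 ^ m),
      3 / 4 * (1 / 4 : ℝ) ^ m ≤ |weierstrassFun y - weierstrassFun θ| := by
  set p := 2 * π / 64 ^ m
  have hp : 0 < p := by positivity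
  obtain ⟨i, hi, -⟩ := existsUnique_add_zsmul_mem_Ioc hp 0 θ
  obtain ⟨j, hj, -⟩ := existsUnique_add_zsmul_mem_Ioc hp (p / 2) θ
  have ha : (i : ℝ) * p ∈ Ioc θ (θ + p) := by simpa using hi
  have hb : ((j : ℝ) + 1 / 2) * p ∈ Ioc θ (θ + p) := by
    convert hj using 1
    rw [zsmul_eq_mul]
    ring
  have hab := abs_weierstrassFun_sub_ge (fun k hk => cos_pow_mul_grid hk i)
    (cos_pow_mul_halfGrid m j) (fun k hk => cos_pow_mul_halfGrid_of_lt hk j)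
    (abs_sub_le_iff.2 ⟨by linarith [ha.2, hb.1], by linarith [ha.1, hb.2]⟩)
  -- `i p` is a peak and `(j + 1/2) p` a trough of the `m`-th term; one of them is far from `θ`.
  by_contra! h
  have htri := abs_sub_le (weierstrassFun (i * p)) (weierstrassFun θ)
    (weierstrassFun ((j + 1 / 2) * p))
  rw [abs_sub_comm (weierstrassFun θ)] at htri
  linarith [h _ ha, h _ hb]

lemma rightDiffQuotUnbounded_weierstrassFun : RightDiffQuotUnbounded weierstrassFun := by
  intro n hn θ
  have hn' : (0 : ℝ) < n := by exact_mod_cast hn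
  -- `9 n` exceeds both `2π n` and `8π n / 3`, which is what the two estimates below need.
  obtain ⟨m, hm⟩ := pow_unbounded_of_one_lt (9 * (n : ℝ)) (by norm_num : (1 : ℝ) < 16)
  have h16 : (16 : ℝ) ^ m = (1 / 4) ^ m * 64 ^ m := by rw [← mul_pow]; norm_num
  have h64 : (16 : ℝ) ^ m ≤ 64 ^ m := pow_le_pow_left₀ (by norm_num) (by norm_num) m
  have hshort : 2 * π / 64 ^ m < 1 / n := by
    rw [div_lt_div_iff₀ (by positivity) hn']
    nlinarith [pi_lt_d2]
  have hsteep : n * (2 * π / 64 ^ m) < 3 / 4 * (1 / 4 : ℝ) ^ m := by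
    rw [mul_div_assoc', div_lt_iff₀ (by positivity), mul_assoc, ← h16]
    nlinarith [pi_lt_d2]
  obtain ⟨y, ⟨hθy, hy⟩, hosc⟩ := exists_abs_weierstrassFun_sub_ge θ m
  refine ⟨y, ⟨hθy, by linarith⟩, ?_⟩
  calc (n : ℝ) * |y - θ| ≤ n * (2 * π / 64 ^ m) := by
        rw [abs_of_pos (sub_pos.2 hθy)]
        gcongr
        linarith
    _ < _ := hsteep
    _ ≤ _ := hosc

noncomputable def weierstrassSeries (z : ℂ) : ℂ := ∑' k : ℕ, (1 / 4 : ℂ) ^ k * z ^ 64 ^ k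

lemma norm_weierstrassSeries_term_le {z : ℂ} (hz : z ∈ closedBall (0 : ℂ) 1) (k : ℕ) :
    ‖(1 / 4 : ℂ) ^ k * z ^ 64 ^ k‖ ≤ (1 / 4 : ℝ) ^ k := by
  rw [mem_closedBall_zero_iff] at hz
  rw [norm_mul, norm_pow, norm_pow, show ‖(1 / 4 : ℂ)‖ = 1 / 4 by norm_num]
  exact mul_le_of_le_one_right (by positivity) (pow_le_one₀ (norm_nonneg z) hz)

lemma tendstoUniformlyOn_weierstrassSeries :
    TendstoUniformlyOn (fun t z => ∑ k ∈ Finset.range t, (1 / 4 : ℂ) ^ k * z ^ 64 ^ k)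
      weierstrassSeries atTop (closedBall 0 1) :=
  tendstoUniformlyOn_tsum_nat (summable_geometric_of_lt_one (by norm_num) (by norm_num))
    fun k _ hz => norm_weierstrassSeries_term_le hz k

lemma continuousOn_weierstrassSeries : ContinuousOn weierstrassSeries (closedBall 0 1) :=
  tendstoUniformlyOn_weierstrassSeries.continuousOn
    (Frequently.of_forall fun _ => by fun_prop)

lemma differentiableOn_weierstrassSeries : DifferentiableOn ℂ weierstrassSeries (ball 0 1) :=
  (tendstoUniformlyOn_weierstrassSeries.mono ball_subset_closedBall).tendstoLocallyUniformlyOn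
    |>.differentiableOn (Eventually.of_forall fun _ => by fun_prop) isOpen_ball

lemma norm_weierstrassSeries_le {z : ℂ} (hz : z ∈ closedBall (0 : ℂ) 1) :
    ‖weierstrassSeries z‖ ≤ 4 / 3 := by
  have hgeom : HasSum (fun k : ℕ => (1 / 4 : ℝ) ^ k) (4 / 3) := by
    convert hasSum_geometric_of_lt_one (r := (1 / 4 : ℝ)) (by norm_num) (by norm_num) using 1
    norm_num
  exact tsum_of_norm_bounded hgeom (norm_weierstrassSeries_term_le hz)

lemma re_weierstrassSeries_exp (θ : ℝ) :
    (weierstrassSeries (Complex.exp (θ * Complex.I))).re = weierstrassFun θ := by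
  have hz : Complex.exp (θ * Complex.I) ∈ closedBall (0 : ℂ) 1 := exp_mem_closedBall θ
  rw [weierstrassSeries, Complex.re_tsum
    ((summable_geometric_of_lt_one (by norm_num) (by norm_num)).of_norm_bounded
      (norm_weierstrassSeries_term_le hz))]
  congr 1 with k
  have hpow : Complex.exp (θ * Complex.I) ^ 64 ^ k =
      Complex.exp ((64 ^ k * θ : ℝ) * Complex.I) := by
    rw [← Complex.exp_nat_mul]
    push_cast
    ring_nf
  rw [hpow, show (1 / 4 : ℂ) ^ k = ((1 / 4 : ℝ) ^ k : ℝ) by push_cast; ring,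
    Complex.re_ofReal_mul, Complex.exp_ofReal_mul_I_re]

lemma mapsTo_ofReal_mul_closedBall {r : ℝ} (hr0 : 0 ≤ r) (hr1 : r ≤ 1) :
    MapsTo (fun z : ℂ => r * z) (closedBall 0 1) (closedBall 0 1) := fun z hz => by
  rw [mem_closedBall_zero_iff] at hz ⊢
  rw [norm_mul, Complex.norm_of_nonneg hr0]
  exact mul_le_one₀ hr1 (norm_nonneg z) hz

lemma mapsTo_ofReal_mul_ball {r : ℝ} (hr0 : 0 ≤ r) (hr1 : r ≤ 1) :
    MapsTo (fun z : ℂ => r * z) (ball 0 1) (ball 0 1) := fun z hz => by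
  rw [mem_ball_zero_iff] at hz ⊢
  rw [norm_mul, Complex.norm_of_nonneg hr0]
  exact (mul_le_of_le_one_left (norm_nonneg z) hr1).trans_lt hz

lemma exists_dilation_close {F : ℂ → ℂ} (hF : ContinuousOn F (closedBall 0 1)) {ε : ℝ}
    (hε : 0 < ε) : ∃ r ∈ Ico (0 : ℝ) 1, ∀ z ∈ closedBall (0 : ℂ) 1, ‖F (r * z) - F z‖ < ε := by
  obtain ⟨δ, hδ, hF⟩ := Metric.uniformContinuousOn_iff.1
    ((isCompact_closedBall 0 1).uniformContinuousOn_of_continuous hF) ε hε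
  set s := min (δ / 2) 1
  have hs : 0 < s := by positivity
  refine ⟨1 - s, ⟨by linarith [min_le_right (δ / 2) 1], by linarith⟩, fun z hz => ?_⟩
  have hrz := mapsTo_ofReal_mul_closedBall (r := 1 - s) (by linarith [min_le_right (δ / 2) 1])
    (by linarith) hz
  rw [← dist_eq_norm]
  refine hF _ hrz _ hz ?_
  rw [mem_closedBall_zero_iff] at hz
  calc dist (((1 - s : ℝ) : ℂ) * z) z = s * ‖z‖ := by
        rw [dist_eq_norm, show ((1 - s : ℝ) : ℂ) * z - z = -((s : ℂ) * z) by push_cast; ring,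
          norm_neg, norm_mul, Complex.norm_of_nonneg hs.le]
    _ ≤ δ / 2 := mul_le_of_le_one_right hs.le hz |>.trans (min_le_left _ _)
    _ < δ := by linarith

lemma exists_lipschitzWith_comp_circleMap {F : ℂ → ℂ} {c : ℂ} {R r : ℝ}
    (hF : DifferentiableOn ℂ F (ball c R)) (hr0 : 0 ≤ r) (hrR : r < R) :
    ∃ K, LipschitzWith K (fun θ => F (circleMap c r θ)) := by
  have hC1 : ContDiffOn ℝ 1 F (closedBall c r) :=
    ((hF.contDiffOn isOpen_ball).restrict_scalars ℝ).mono (closedBall_subset_ball hrR)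
  obtain ⟨K, hK⟩ := hC1.exists_lipschitzOnWith one_ne_zero (convex_closedBall c r)
    (isCompact_closedBall c r)
  refine ⟨K * Real.nnabs r, lipschitzOnWith_univ.1 ?_⟩
  exact hK.comp (lipschitzWith_circleMap c r).lipschitzOnWith
    fun θ _ => circleMap_mem_closedBall c hr0 θ

namespace DiscAlgebra

noncomputable def toFun (f : DiscAlgebra) (z : ℂ) : ℂ :=
  if h : z ∈ closedBall (0 : ℂ) 1 then f.1 ⟨z, h⟩ else 0

lemma toFun_of_mem (f : DiscAlgebra) {z : ℂ} (hz : z ∈ closedBall (0 : ℂ) 1) :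
    f.toFun z = f.1 ⟨z, hz⟩ :=
  dif_pos hz

lemma differentiableOn_toFun (f : DiscAlgebra) : DifferentiableOn ℂ f.toFun (ball 0 1) := f.2

lemma continuousOn_toFun (f : DiscAlgebra) : ContinuousOn f.toFun (closedBall 0 1) := by
  rw [continuousOn_iff_continuous_domRestrict]
  convert f.1.continuous using 1
  ext z
  exact toFun_of_mem f z.2

def ofFun (F : ℂ → ℂ) (hc : ContinuousOn F (closedBall 0 1))
    (hd : DifferentiableOn ℂ F (ball 0 1)) : DiscAlgebra :=
  ⟨⟨(closedBall 0 1).domRestrict F, hc.domRestrict⟩,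
    hd.congr fun _ hz => dif_pos (ball_subset_closedBall hz)⟩

lemma toFun_ofFun {F : ℂ → ℂ} (hc : ContinuousOn F (closedBall 0 1))
    (hd : DifferentiableOn ℂ F (ball 0 1)) {z : ℂ} (hz : z ∈ closedBall (0 : ℂ) 1) :
    (ofFun F hc hd).toFun z = F z :=
  dif_pos hz

lemma bdry_ofFun {F : ℂ → ℂ} (hc : ContinuousOn F (closedBall 0 1))
    (hd : DifferentiableOn ℂ F (ball 0 1)) (θ : ℝ) :
    bdry (ofFun F hc hd) θ = F (Complex.exp (θ * Complex.I)) :=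
  rfl

lemma dist_le_of_forall_norm_sub_le {f g : DiscAlgebra} {ε : ℝ} (hε : 0 ≤ ε)
    (h : ∀ z ∈ closedBall (0 : ℂ) 1, ‖f.toFun z - g.toFun z‖ ≤ ε) : dist f g ≤ ε :=
  (ContinuousMap.dist_le hε).2 fun z => by
    simpa only [dist_eq_norm, toFun_of_mem _ z.2] using h z z.2

end DiscAlgebra

lemma mem_Sset_iff (f : DiscAlgebra) :
    f ∈ Sset ↔ RightDiffQuotUnbounded (fun θ => (bdry f θ).re) :=
  Iff.rfl

theorem Sset_dense : Dense Sset := by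
  refine Metric.dense_iff.2 fun f ε hε => ?_
  obtain ⟨r, ⟨hr0, hr1⟩, hr⟩ := exists_dilation_close f.continuousOn_toFun (half_pos hε)
  have hc : 0 < ε / 4 := by positivity
  let F : ℂ → ℂ := fun z => f.toFun (r * z) + (ε / 4 : ℝ) * weierstrassSeries z
  have hFc : ContinuousOn F (closedBall 0 1) :=
    (f.continuousOn_toFun.comp (by fun_prop) (mapsTo_ofReal_mul_closedBall hr0 hr1.le)).add
      (continuousOn_const.mul continuousOn_weierstrassSeries)
  have hFd : DifferentiableOn ℂ F (ball 0 1) :=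
    (f.differentiableOn_toFun.comp (by fun_prop) (mapsTo_ofReal_mul_ball hr0 hr1.le)).add
      (differentiableOn_const _ |>.mul differentiableOn_weierstrassSeries)
  refine ⟨DiscAlgebra.ofFun F hFc hFd, ?_, ?_⟩
  · refine mem_ball.2 <| (DiscAlgebra.dist_le_of_forall_norm_sub_le
      (ε := ε / 2 + ε / 4 * (4 / 3)) (by positivity) fun z hz => ?_).trans_lt (by linarith)
    rw [DiscAlgebra.toFun_ofFun hFc hFd hz, add_sub_right_comm]
    refine (norm_add_le _ _).trans (add_le_add (hr z hz).le ?_)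
    rw [norm_mul, Complex.norm_of_nonneg hc.le]
    gcongr
    exact norm_weierstrassSeries_le hz
  · obtain ⟨K, hK⟩ := exists_lipschitzWith_comp_circleMap f.differentiableOn_toFun hr0 hr1
    rw [mem_Sset_iff]
    convert (rightDiffQuotUnbounded_weierstrassFun.const_mul hc).add_lipschitzWith
      (RCLike.lipschitzWith_re.comp hK) using 2 with θ
    simp only [DiscAlgebra.bdry_ofFun, F, Complex.add_re, Complex.re_ofReal_mul,
      re_weierstrassSeries_exp, Function.comp, circleMap_zero, RCLike.re_to_complex]
    exact add_comm _ _
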